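/- Let G be a finite simple graph without isolated vertices, let n ≥ 2 be an integer, and let v be a new vertex. Let G̃ be the graph obtained by taking, for each edge e = xy of G, a copy of the gadget H_n in which the vertices x, y, v of H_n are identified with the endpoints x, y of e and with v respectively, all gadget copies being otherwise pairwise disjoint. Let η_1 be the coloring of G̃ with η_1(v) = 3, η_1(w) = 1 for every vertex w of G, and coloring the remaining vertices of each gadget copy according to η. Then η_1 is a proper 3-coloring of G̃, and for every vertex cover B of G, η_1 is the unique proper 3-coloring of G̃ that agrees with η_1 on B ∪ {v}. -/

import Mathlib

/-- The inner (non-boundary) vertices of the gadget graph `H_n`, i.e. the vertices of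
`H_n` other than `x`, `y`, `v`: the vertices `u_{1,i}` (`a i`) and `u_{2,i}` (`b i`)
for `1 ≤ i ≤ n`. -/
inductive HInner (n : ℕ) : Type
  | a : Fin n → HInner n
  | b : Fin n → HInner n

/-- The vertices of the graph `G̃`: the vertices of `G` together with the new vertex
`v` (`Sum.inl (Sum.inr ())`), and, for each edge `e` of `G`, a disjoint copy of the
inner vertices of the gadget `H_n`. -/
abbrev NVert {V : Type*} (G : SimpleGraph V) (n : ℕ) : Type _ :=
  (V ⊕ Unit) ⊕ (G.edgeSet × HInner n)

/-- The edge relation of `G̃`: in the gadget copy attached to an edge `e = xy` of `G`,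
both endpoints `x`, `y` are joined to all the vertices `u_{1,i}`, `u_{2,i}`, the new
vertex `v` is joined to all the `u_{1,i}`, and `u_{1,i}` is joined to `u_{2,i}`,
exactly as in `H_n`. -/
def NRel {V : Type*} (G : SimpleGraph V) (n : ℕ) :
    NVert G n → NVert G n → Prop
  | Sum.inl (Sum.inl w), Sum.inr (e, _) => w ∈ (e : Sym2 V)
  | Sum.inl (Sum.inr _), Sum.inr (_, .a _) => True
  | Sum.inr (e, .a i), Sum.inr (e', .b j) => e = e' ∧ i = j
  | _, _ => False

/-- The graph `G̃` obtained by attaching, for every edge `e = xy` of `G`, a copy of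
the gadget `H_n` along the endpoints `x`, `y` of `e` and the new vertex `v`. -/
def Ngraph {V : Type*} (G : SimpleGraph V) (n : ℕ) : SimpleGraph (NVert G n) :=
  SimpleGraph.fromRel (NRel G n)

/-- The coloring `η₁` of `G̃` (colors `1, 2, 3` are modelled as `0, 1, 2 : Fin 3`):
`η₁(v) = 3`, `η₁(w) = 1` for every vertex `w` of `G`, and each gadget copy is colored
according to `η`, i.e. `η(u_{1,i}) = 2` and `η(u_{2,i}) = 3`. -/
def ηN {V : Type*} (G : SimpleGraph V) (n : ℕ) : NVert G n → Fin 3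
  | Sum.inl (Sum.inl _) => 0
  | Sum.inl (Sum.inr _) => 2
  | Sum.inr (_, .a _) => 1
  | Sum.inr (_, .b _) => 2

/-!
Fix the apex `v` at colour 3. In the gadget on an edge `xy`, if `x` has colour 1 then every
`u_{1,i}` sees colours 1 and 3 and must take 2, every `u_{2,i}` then sees 1 and 2 and must
take 3, and `y`, adjacent to `u_{1,i}` and `u_{2,i}`, is forced back to colour 1. A vertex
cover meets every edge and no vertex of `G` is isolated, so every vertex of `G` gets colour 1,
and then every gadget is coloured as by `η`.
-/

namespace Ngraph

variable {V : Type*} {G : SimpleGraph V} {n : ℕ}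

theorem nrel_irrefl (p : NVert G n) : ¬ NRel G n p p := by
  rcases p with ((w | u) | ⟨e, i | i⟩) <;> simp [NRel]

theorem adj_iff {p q : NVert G n} : (Ngraph G n).Adj p q ↔ NRel G n p q ∨ NRel G n q p := by
  rw [Ngraph, SimpleGraph.fromRel_adj, and_iff_right_iff_imp]
  rintro h rfl
  exact h.elim (nrel_irrefl p) (nrel_irrefl p)

theorem adj_vertex_inner {e : G.edgeSet} {w : V} (hw : w ∈ (e : Sym2 V)) (u : HInner n) :
    (Ngraph G n).Adj (Sum.inl (Sum.inl w)) (Sum.inr (e, u)) :=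
  adj_iff.2 <| Or.inl <| by cases u <;> exact hw

theorem adj_apex_a (e : G.edgeSet) (i : Fin n) :
    (Ngraph G n).Adj (Sum.inl (Sum.inr ())) (Sum.inr (e, .a i)) :=
  adj_iff.2 <| Or.inl trivial

theorem adj_a_b (e : G.edgeSet) (i : Fin n) :
    (Ngraph G n).Adj (Sum.inr (e, .a i)) (Sum.inr (e, .b i)) :=
  adj_iff.2 <| Or.inl ⟨rfl, rfl⟩

theorem ηN_ne_of_adj {p q : NVert G n} (h : (Ngraph G n).Adj p q) : ηN G n p ≠ ηN G n q := by
  have key : ∀ p q : NVert G n, NRel G n p q → ηN G n p ≠ ηN G n q := by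
    rintro ((w | u) | ⟨e, i | i⟩) ((w' | u') | ⟨e', j | j⟩) h <;> simp_all [NRel, ηN]
  rcases adj_iff.1 h with h | h
  exacts [key p q h, (key q p h).symm]

section Forcing

variable {σ : NVert G n → Fin 3} (hσ : ∀ p q, (Ngraph G n).Adj p q → σ p ≠ σ q)
  (hv : σ (Sum.inl (Sum.inr ())) = 2)
include hσ hv

theorem eq_one_of_vertex_eq_zero {e : G.edgeSet} {x : V} (hx : x ∈ (e : Sym2 V))
    (hx0 : σ (Sum.inl (Sum.inl x)) = 0) (i : Fin n) : σ (Sum.inr (e, .a i)) = 1 := by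
  have h0 := hσ _ _ (adj_vertex_inner hx (.a i))
  have h2 := hσ _ _ (adj_apex_a e i)
  rw [hx0] at h0
  rw [hv] at h2
  omega

theorem eq_two_of_vertex_eq_zero {e : G.edgeSet} {x : V} (hx : x ∈ (e : Sym2 V))
    (hx0 : σ (Sum.inl (Sum.inl x)) = 0) (i : Fin n) : σ (Sum.inr (e, .b i)) = 2 := by
  have h0 := hσ _ _ (adj_vertex_inner hx (.b i))
  have h1 := hσ _ _ (adj_a_b e i)
  rw [hx0] at h0
  rw [eq_one_of_vertex_eq_zero hσ hv hx hx0] at h1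
  omega

theorem vertex_eq_zero_of_mem (hn : 0 < n) {e : G.edgeSet} {x y : V}
    (hx : x ∈ (e : Sym2 V)) (hy : y ∈ (e : Sym2 V)) (hx0 : σ (Sum.inl (Sum.inl x)) = 0) :
    σ (Sum.inl (Sum.inl y)) = 0 := by
  have h1 := hσ _ _ (adj_vertex_inner hy (.a ⟨0, hn⟩))
  have h2 := hσ _ _ (adj_vertex_inner hy (.b ⟨0, hn⟩))
  rw [eq_one_of_vertex_eq_zero hσ hv hx hx0] at h1
  rw [eq_two_of_vertex_eq_zero hσ hv hx hx0] at h2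
  omega

end Forcing

end Ngraph

open Ngraph in
theorem stmt18_general {V : Type*} (G : SimpleGraph V)
    (n : ℕ) (hn : 2 ≤ n)
    (hnoiso : ∀ a : V, ∃ b, G.Adj a b) :
    (∀ p q, (Ngraph G n).Adj p q → ηN G n p ≠ ηN G n q) ∧
    (∀ B : Set V, (∀ a b : V, G.Adj a b → a ∈ B ∨ b ∈ B) →
      ∀ σ : NVert G n → Fin 3,
        (∀ p q, (Ngraph G n).Adj p q → σ p ≠ σ q) →
        (∀ w ∈ B, σ (Sum.inl (Sum.inl w)) = ηN G n (Sum.inl (Sum.inl w))) →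
        σ (Sum.inl (Sum.inr ())) = ηN G n (Sum.inl (Sum.inr ())) →
        σ = ηN G n) := by
  refine ⟨fun p q => ηN_ne_of_adj, fun B hB σ hσ hBσ hv => ?_⟩
  have hvertex (w : V) : σ (Sum.inl (Sum.inl w)) = 0 := by
    obtain ⟨b, hwb⟩ := hnoiso w
    rcases hB w b hwb with hw | hb
    · exact hBσ w hw
    · exact vertex_eq_zero_of_mem (e := ⟨s(w, b), hwb⟩) hσ hv (by omega)
        (Sym2.mem_mk_right w b) (Sym2.mem_mk_left w b) (hBσ b hb)
  funext p
  rcases p with ((w | ⟨⟩) | ⟨e, i | i⟩)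
  · exact hvertex w
  · exact hv
  · exact eq_one_of_vertex_eq_zero hσ hv e.1.out_fst_mem (hvertex _) i
  · exact eq_two_of_vertex_eq_zero hσ hv e.1.out_fst_mem (hvertex _) i

/-- Let `G` be a finite graph without isolated vertices, `n ≥ 2`, and let `G̃` be
obtained by attaching a copy of the gadget `H_n` to every edge of `G`.  Then `η₁` is a
proper 3-coloring of `G̃`, and for every vertex cover `B` of `G`, `η₁` is the unique
proper 3-coloring of `G̃` agreeing with `η₁` on `B ∪ {v}`. -/
theorem stmt18 {V : Type*} [Fintype V] (G : SimpleGraph V)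
    (n : ℕ) (hn : 2 ≤ n)
    (hnoiso : ∀ a : V, ∃ b, G.Adj a b) :
    (∀ p q, (Ngraph G n).Adj p q → ηN G n p ≠ ηN G n q) ∧
    (∀ B : Set V, (∀ a b : V, G.Adj a b → a ∈ B ∨ b ∈ B) →
      ∀ σ : NVert G n → Fin 3,
        (∀ p q, (Ngraph G n).Adj p q → σ p ≠ σ q) →
        (∀ w ∈ B, σ (Sum.inl (Sum.inl w)) = ηN G n (Sum.inl (Sum.inl w))) →
        σ (Sum.inl (Sum.inr ())) = ηN G n (Sum.inl (Sum.inr ())) →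
        σ = ηN G n) :=
  stmt18_general G n hn hnoiso
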